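/- arXiv:1503.00775 — 2 statements merged into one kernel-verified Lean document; each statement's English description precedes it below -/
import Mathlib

section
/- Let a, b, c ∈ ℂ be nonzero and α, β, γ ∈ ℂ. Then αβ·c + αγ·b + βγ·a = 0 if and only if (α/a − i·β/b)² + (β/b − i·γ/c)² + (γ/c − i·α/a)² = 0. -/
theorem quadric_coordinate_identity (a b c α β γ : ℂ)
    (ha : a ≠ 0) (hb : b ≠ 0) (hc : c ≠ 0) :
    α * β * c + α * γ * b + β * γ * a = 0 ↔
      (α / a - Complex.I * (β / b)) ^ 2 + (β / b - Complex.I * (γ / c)) ^ 2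
        + (γ / c - Complex.I * (α / a)) ^ 2 = 0 := by
  have key : (α / a - Complex.I * (β / b)) ^ 2 + (β / b - Complex.I * (γ / c)) ^ 2
        + (γ / c - Complex.I * (α / a)) ^ 2
      = (-2 * Complex.I / (a * b * c)) * (α * β * c + α * γ * b + β * γ * a) := by
    field_simp
    ring_nf
    simp only [Complex.I_sq]
    ring
  rw [key, mul_eq_zero]
  constructor
  · intro h; right; exact h
  · rintro (h | h)
    · exact absurd h (by simp [Complex.I_ne_zero, ha, hb, hc, sub_eq_zero, div_eq_zero_iff])
    · exact h
end

section
/- Let A : ℂ → ℂ be a polynomial. Then lim_{N→∞} sup_{|z| ≤ 1} | ∫₀^z A(ζ) · N ζ^{N−1} dζ − A(z) z^N | = 0, where ∫₀^z denotes the straight-line complex path integral from 0 to z. -/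
open scoped BigOperators

/-- The straight-line path integral `∫₀^z A(ζ) · N ζ^{N-1} dζ` for a polynomial
`A(ζ) = ∑_{j=0}^m a_j ζ^j`, computed via the primitive vanishing at the origin:
`∑_j a_j · N · z^{j+N} / (j+N)`. -/
noncomputable def keyIntegral (m : ℕ) (a : Fin (m + 1) → ℂ) (N : ℕ) (z : ℂ) : ℂ :=
  ∑ j : Fin (m + 1), a j * (N : ℂ) * z ^ ((j : ℕ) + N) / (((j : ℕ) : ℂ) + (N : ℂ))

theorem key_estimate_polynomial_case (m : ℕ) (a : Fin (m + 1) → ℂ) :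
    ∀ ε : ℝ, 0 < ε → ∃ N₀ : ℕ, ∀ N ≥ N₀, ∀ z : ℂ, ‖z‖ ≤ 1 →
      ‖keyIntegral m a N z - (∑ j : Fin (m + 1), a j * z ^ (j : ℕ)) * z ^ N‖ < ε := by
  intro ε hε
  set C : ℝ := ∑ j : Fin (m + 1), ‖a j‖ * m with hC
  have hC0 : 0 ≤ C := Finset.sum_nonneg fun j _ => by positivity
  obtain ⟨N₀, hN₀⟩ := exists_nat_gt (C / ε)
  refine ⟨N₀ + 1, fun N hN z hz => ?_⟩
  have hN1 : 1 ≤ N := le_trans (Nat.le_add_left 1 N₀) hN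
  have hNpos : (0 : ℝ) < N := by exact_mod_cast hN1
  have key : keyIntegral m a N z - (∑ j : Fin (m + 1), a j * z ^ (j : ℕ)) * z ^ N
      = ∑ j : Fin (m + 1), a j * (-(j : ℂ) / (((j : ℕ) : ℂ) + N)) * z ^ ((j : ℕ) + N) := by
    rw [keyIntegral, Finset.sum_mul, ← Finset.sum_sub_distrib]
    refine Finset.sum_congr rfl fun j _ => ?_
    have hne : (((j : ℕ) : ℂ) + (N : ℂ)) ≠ 0 := by
      have : (0:ℝ) < (j:ℕ) + N := by positivity
      intro h
      have := congrArg Complex.re h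
      simp at this
      push_cast at this
      linarith
    field_simp
    ring
  rw [key]
  calc ‖∑ j : Fin (m + 1), a j * (-(j : ℂ) / (((j : ℕ) : ℂ) + N)) * z ^ ((j : ℕ) + N)‖
      ≤ ∑ j : Fin (m + 1), ‖a j * (-(j : ℂ) / (((j : ℕ) : ℂ) + N)) * z ^ ((j : ℕ) + N)‖ :=
        norm_sum_le _ _
    _ ≤ ∑ j : Fin (m + 1), ‖a j‖ * m / N := by
        refine Finset.sum_le_sum fun j _ => ?_
        rw [norm_mul, norm_mul, norm_pow]
        have hzpow : ‖z‖ ^ ((j : ℕ) + N) ≤ 1 := pow_le_one₀ (norm_nonneg z) hz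
        have hfrac : ‖(-(j : ℂ) / (((j : ℕ) : ℂ) + N))‖ ≤ (m : ℝ) / N := by
          rw [norm_div, norm_neg]
          have h1 : ‖((j : ℕ) : ℂ)‖ = (j : ℕ) := by
            simp
          have h2 : ‖(((j : ℕ) : ℂ) + (N : ℂ))‖ = (j : ℕ) + N := by
            rw [← Nat.cast_add, Complex.norm_natCast]
            push_cast; ring
          rw [h1, h2]
          apply div_le_div₀ (by positivity)
          · exact_mod_cast Nat.le_of_lt_succ j.isLt
          · exact hNpos
          · linarith [Nat.cast_nonneg (α := ℝ) (j : ℕ)]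
        calc ‖a j‖ * ‖(-(j : ℂ) / (((j : ℕ) : ℂ) + N))‖ * ‖z‖ ^ ((j : ℕ) + N)
            ≤ ‖a j‖ * ((m : ℝ) / N) * 1 := by
              exact mul_le_mul (mul_le_mul_of_nonneg_left hfrac (norm_nonneg _)) hzpow
                (by positivity) (by positivity)
          _ = ‖a j‖ * m / N := by ring
    _ = C / N := by rw [hC, Finset.sum_div]
    _ < ε := by
        rw [div_lt_iff₀ hNpos]
        have hNN : (N₀ : ℝ) < N := by exact_mod_cast lt_of_lt_of_le (Nat.lt_succ_self N₀) hN
        have : C / ε < N := lt_trans hN₀ hNN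
        calc C = (C / ε) * ε := by field_simp
          _ < N * ε := by exact mul_lt_mul_of_pos_right this hε
          _ = ε * N := by ring
end
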